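/- arXiv:1911.06685 — 3 statements merged into one kernel-verified Lean document; each statement's English description precedes it below -/
import Mathlib

section
/- In the linear SEM of the previous setting, a linear predictor Ŷ = α_A A + Σ_j α_j X^{(j)} satisfies Ŷ(A=1, R=r, noise=u) = Ŷ(A=0, R=r, noise=u) for all r and u if and only if Σ_j α_j · (Σ_{paths A→X_j disjoint from R} Π_{edges in path} β) − α_A = 0. -/
/-!
Since both worlds share the resolved values and the noise, the difference
`d = X(A=1) - X(A=0)` solves the homogeneous SEM with `d_A = 1` and `d_r = 0` on `R`.
Splitting off the last edge of a path shows that the path sums solve the same system, and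
acyclicity makes its solution unique, so `d_j` is the path sum to `j` and
`Ŷ(A=1) - Ŷ(A=0) = α_A + Σ_j α_j · pathSum j`. For the forward implication the hypothesis has
to be applied to an actual solution, built by recursion along the topological order.
-/

open Finset

/-- Sum, over all directed paths from the root `0` to `j` that avoid the set
`R` of intervened variables, of the product of the edge coefficients `β`
(paths are encoded as finite sets of vertices since the DAG on `Fin (n+1)` is
topologically ordered: `β i j = 0` unless `i < j`). -/
def pathSum (n : ℕ) (β : Fin (n+1) → Fin (n+1) → ℝ) (R : Finset (Fin (n+1)))
    (j : Fin (n+1)) : ℝ :=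
  ∑ S ∈ Finset.univ.powerset.filter
      (fun S : Finset (Fin (n+1)) =>
        0 ∈ S ∧ j ∈ S ∧ (∀ i ∈ S, i ≤ j) ∧ S ∩ R = ∅),
    (((S.sort (· ≤ ·)).zip (S.sort (· ≤ ·)).tail).map (fun e => β e.1 e.2)).prod

def chainProd {α M : Type*} [CommMonoid M] (f : α → α → M) (l : List α) : M :=
  ((l.zip l.tail).map fun e => f e.1 e.2).prod

theorem chainProd_append_pair {α M : Type*} [CommMonoid M] (f : α → α → M) (l : List α)
    (a b : α) : chainProd f (l ++ [a, b]) = chainProd f (l ++ [a]) * f a b := by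
  induction l with
  | nil => simp [chainProd]
  | cons c l ih =>
    cases l with
    | nil => simp [chainProd]
    | cons d l => simp_all [chainProd, mul_assoc]

theorem Finset.sort_insert_of_forall_lt {α : Type*} [LinearOrder α] {s : Finset α} {a : α}
    (h : ∀ b ∈ s, b < a) : (insert a s).sort (· ≤ ·) = s.sort (· ≤ ·) ++ [a] := by
  refine (insert a s).sortedLT_sort.eq_of_mem_iff ?_ (by simp [or_comm])
  exact (List.pairwise_append.2 ⟨s.sortedLT_sort.pairwise, List.pairwise_singleton _ _,
    fun b hb _ hc => List.eq_of_mem_singleton hc ▸ h b ((mem_sort _).1 hb)⟩).sortedLT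

theorem chainProd_sort_insert {α M : Type*} [LinearOrder α] [CommMonoid M] (f : α → α → M)
    {s : Finset α} {i j : α} (hi : i ∈ s) (hle : ∀ x ∈ s, x ≤ i) (hij : i < j) :
    chainProd f ((insert j s).sort (· ≤ ·)) = chainProd f (s.sort (· ≤ ·)) * f i j := by
  have hs : s.sort (· ≤ ·) = (s.erase i).sort (· ≤ ·) ++ [i] := by
    conv_lhs => rw [← insert_erase hi]
    exact sort_insert_of_forall_lt fun x hx =>
      (hle x (mem_of_mem_erase hx)).lt_of_ne (ne_of_mem_erase hx)
  rw [sort_insert_of_forall_lt fun x hx => (hle x hx).trans_lt hij, hs, List.append_assoc,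
    List.singleton_append, chainProd_append_pair]

section Paths

variable {n : ℕ}

def pathSets (R : Finset (Fin (n+1))) (j : Fin (n+1)) : Finset (Finset (Fin (n+1))) :=
  univ.powerset.filter fun S => 0 ∈ S ∧ j ∈ S ∧ (∀ i ∈ S, i ≤ j) ∧ S ∩ R = ∅

@[simp]
theorem mem_pathSets {R S : Finset (Fin (n+1))} {j : Fin (n+1)} :
    S ∈ pathSets R j ↔ 0 ∈ S ∧ j ∈ S ∧ (∀ i ∈ S, i ≤ j) ∧ S ∩ R = ∅ := by
  simp [pathSets]

theorem pathSum_eq_sum_pathSets (β : Fin (n+1) → Fin (n+1) → ℝ) (R : Finset (Fin (n+1)))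
    (j : Fin (n+1)) :
    pathSum n β R j = ∑ S ∈ pathSets R j, chainProd β (S.sort (· ≤ ·)) :=
  rfl

theorem pathSets_zero {R : Finset (Fin (n+1))} (hR : 0 ∉ R) : pathSets R 0 = {{0}} := by
  ext S
  simp only [mem_pathSets, Fin.le_zero_iff, mem_singleton]
  constructor
  · rintro ⟨h0, -, hS, -⟩
    exact eq_singleton_iff_unique_mem.2 ⟨h0, hS⟩
  · rintro rfl
    simp [singleton_inter_of_notMem hR]

theorem pathSets_of_mem {R : Finset (Fin (n+1))} {j : Fin (n+1)} (hj : j ∈ R) :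
    pathSets R j = ∅ := by
  refine eq_empty_of_forall_notMem fun S hS => ?_
  obtain ⟨-, hjS, -, hSR⟩ := mem_pathSets.1 hS
  simpa [hSR] using mem_inter_of_mem hjS hj

theorem insert_mem_pathSets {R T : Finset (Fin (n+1))} {i j : Fin (n+1)} (hij : i < j)
    (hjR : j ∉ R) (hT : T ∈ pathSets R i) : insert j T ∈ pathSets R j := by
  obtain ⟨h0, -, hle, hTR⟩ := mem_pathSets.1 hT
  refine mem_pathSets.2 ⟨mem_insert_of_mem h0, mem_insert_self _ _, ?_, ?_⟩
  · simpa using fun x hx => (hle x hx).trans hij.le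
  · rw [insert_inter_of_notMem hjR, hTR]

theorem erase_mem_pathSets {R S : Finset (Fin (n+1))} {j : Fin (n+1)} (hj0 : j ≠ 0)
    (hS : S ∈ pathSets R j) (hne : (S.erase j).Nonempty) :
    (S.erase j).max' hne < j ∧ S.erase j ∈ pathSets R ((S.erase j).max' hne) := by
  obtain ⟨h0, -, hle, hSR⟩ := mem_pathSets.1 hS
  have hmax := (S.erase j).max'_mem hne
  refine ⟨(hle _ (mem_of_mem_erase hmax)).lt_of_ne (ne_of_mem_erase hmax),
    mem_pathSets.2 ⟨mem_erase.2 ⟨hj0.symm, h0⟩, hmax, fun x hx => le_max' _ x hx, ?_⟩⟩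
  exact subset_empty.1 (hSR ▸ inter_subset_inter_right (erase_subset j S))

theorem pathSum_eq_sum_mul (β : Fin (n+1) → Fin (n+1) → ℝ)
    (hβ : ∀ i j, ¬ i < j → β i j = 0) (R : Finset (Fin (n+1))) {j : Fin (n+1)} (hj0 : j ≠ 0)
    (hjR : j ∉ R) :
    pathSum n β R j = ∑ i, β i j * pathSum n β R i := by
  rw [← sum_filter_of_ne fun i _ h => by_contra fun hij => h (by rw [hβ i j hij, zero_mul])]
  simp_rw [pathSum_eq_sum_pathSets, mul_sum]
  rw [sum_sigma']
  symm
  -- A path to `j` is a path to its penultimate vertex `i < j` followed by the edge `i → j`.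
  refine sum_nbij (fun p => insert j p.2) ?_ ?_ ?_ ?_
  · rintro ⟨i, T⟩ hT
    obtain ⟨hij, hT⟩ := mem_sigma.1 hT
    exact insert_mem_pathSets (mem_filter.1 hij).2 hjR hT
  · rintro ⟨i, T⟩ hT ⟨i', T'⟩ hT' (hTT' : insert j T = insert j T')
    obtain ⟨hij, hT⟩ := mem_sigma.1 hT
    obtain ⟨hij', hT'⟩ := mem_sigma.1 hT'
    obtain ⟨-, hiT, hle, -⟩ := mem_pathSets.1 hT
    obtain ⟨-, hiT', hle', -⟩ := mem_pathSets.1 hT'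
    have hjT : j ∉ T := fun h => (hle j h).not_gt (mem_filter.1 hij).2
    have hjT' : j ∉ T' := fun h => (hle' j h).not_gt (mem_filter.1 hij').2
    obtain rfl : T = T' := by rw [← erase_insert hjT, hTT', erase_insert hjT']
    obtain rfl : i = i' := le_antisymm (hle' i hiT) (hle i' hiT')
    rfl
  · intro S hS
    obtain ⟨h0, hjS, -, -⟩ := mem_pathSets.1 hS
    have hne : (S.erase j).Nonempty := ⟨0, mem_erase.2 ⟨hj0.symm, h0⟩⟩
    obtain ⟨hij, hT⟩ := erase_mem_pathSets hj0 hS hne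
    exact ⟨⟨_, S.erase j⟩, mem_sigma.2 ⟨mem_filter.2 ⟨mem_univ _, hij⟩, hT⟩,
      insert_erase hjS⟩
  · rintro ⟨i, T⟩ hT
    obtain ⟨hij, hT⟩ := mem_sigma.1 hT
    obtain ⟨-, hiT, hle, -⟩ := mem_pathSets.1 hT
    rw [chainProd_sort_insert β hiT hle (mem_filter.1 hij).2, mul_comm]

end Paths

section SEM

variable {n : ℕ}

def SolvesSEM (β : Fin (n+1) → Fin (n+1) → ℝ) (R : Finset (Fin (n+1))) (a : ℝ)
    (rv u x : Fin (n+1) → ℝ) : Prop :=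
  ∀ j, x j = if j = 0 then a else if j ∈ R then rv j else (∑ i, β i j * x i) + u j

-- The guard `i < j` only serves termination: in an acyclic SEM `β i j = 0` otherwise.
noncomputable def semSolution (β : Fin (n+1) → Fin (n+1) → ℝ) (R : Finset (Fin (n+1)))
    (a : ℝ) (rv u : Fin (n+1) → ℝ) (j : Fin (n+1)) : ℝ :=
  if j = 0 then a
  else if j ∈ R then rv j
  else (∑ i : Fin (n+1), if i < j then β i j * semSolution β R a rv u i else 0) + u j
termination_by j

variable {β : Fin (n+1) → Fin (n+1) → ℝ} {R : Finset (Fin (n+1))} {a b : ℝ}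
  {rv u x y : Fin (n+1) → ℝ}

theorem solvesSEM_semSolution (hβ : ∀ i j, ¬ i < j → β i j = 0) :
    SolvesSEM β R a rv u (semSolution β R a rv u) := by
  intro j
  rw [semSolution]
  congr 3
  refine sum_congr rfl fun i _ => ?_
  by_cases hij : i < j
  · rw [if_pos hij]
  · rw [if_neg hij, hβ i j hij, zero_mul]

theorem SolvesSEM.sub (hx : SolvesSEM β R a rv u x) (hy : SolvesSEM β R b rv u y) :
    SolvesSEM β R (a - b) 0 0 (x - y) := by
  intro j
  rw [Pi.sub_apply, hx j, hy j]
  split_ifs <;> simp [mul_sub, sum_sub_distrib]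

theorem SolvesSEM.unique (hβ : ∀ i j, ¬ i < j → β i j = 0) (hx : SolvesSEM β R a rv u x)
    (hy : SolvesSEM β R a rv u y) : x = y := by
  funext j
  induction j using WellFoundedLT.induction with
  | _ j ih =>
    rw [hx j, hy j]
    congr 2
    refine congrArg (· + u j) (sum_congr rfl fun i _ => ?_)
    by_cases hij : i < j
    · rw [ih i hij]
    · simp [hβ i j hij]

theorem solvesSEM_pathSum (hβ : ∀ i j, ¬ i < j → β i j = 0) (hR : 0 ∉ R) :
    SolvesSEM β R 1 0 0 (pathSum n β R) := by
  intro j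
  split_ifs with hj0 hjR
  · simp [hj0, pathSum_eq_sum_pathSets, pathSets_zero hR, chainProd]
  · simp [pathSum_eq_sum_pathSets, pathSets_of_mem hjR]
  · simpa using pathSum_eq_sum_mul β hβ R hj0 hjR

theorem SolvesSEM.sub_eq_pathSum (hβ : ∀ i j, ¬ i < j → β i j = 0) (hR : 0 ∉ R)
    (hx : SolvesSEM β R 1 rv u x) (hy : SolvesSEM β R 0 rv u y) : x - y = pathSum n β R :=
  SolvesSEM.unique hβ (by simpa using hx.sub hy) (solvesSEM_pathSum hβ hR)

end SEM

/-- Theorem 2 (strong resolved fairness for linear additive SEMs): a linear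
predictor `Ŷ = α_A·A + Σ_j α_j·X⁽ʲ⁾` is invariant between the interventional
worlds `do(A=1, R=rv)` and `do(A=0, R=rv)` for all interventions `rv` and all
noises `u` if and only if
`α_A + Σ_j α_j · (Σ_{paths A→X_j disjoint from R} Π β) = 0`
(sign convention: `Ŷ(A=1) - Ŷ(A=0) = α_A + Σ_j α_j·(path sum)`). -/
theorem linear_sem_strong_resolved_fairness (n : ℕ)
    (β : Fin (n+1) → Fin (n+1) → ℝ)
    (hβ : ∀ i j : Fin (n+1), ¬ i < j → β i j = 0)
    (R : Finset (Fin (n+1))) (hR : (0 : Fin (n+1)) ∉ R)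
    (αA : ℝ) (α : Fin (n+1) → ℝ) :
    (∀ (u rv : Fin (n+1) → ℝ) (val : ℝ → Fin (n+1) → ℝ),
        (∀ (a : ℝ) (j : Fin (n+1)), val a j =
          if j = 0 then a
          else if j ∈ R then rv j
          else (∑ i, β i j * val a i) + u j) →
        αA * 1 + ∑ j ∈ Finset.univ.filter (· ≠ (0 : Fin (n+1))), α j * val 1 j
          = αA * 0 + ∑ j ∈ Finset.univ.filter (· ≠ (0 : Fin (n+1))), α j * val 0 j)
      ↔ αA + ∑ j ∈ Finset.univ.filter (· ≠ (0 : Fin (n+1))),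
          α j * pathSum n β R j = 0 := by
  have hgap : ∀ (u rv : Fin (n+1) → ℝ) (val : ℝ → Fin (n+1) → ℝ),
      (∀ a, SolvesSEM β R a rv u (val a)) →
      (αA * 1 + ∑ j ∈ univ.filter (· ≠ 0), α j * val 1 j)
          - (αA * 0 + ∑ j ∈ univ.filter (· ≠ 0), α j * val 0 j)
        = αA + ∑ j ∈ univ.filter (· ≠ 0), α j * pathSum n β R j := by
    intro u rv val hval
    simp only [← (hval 1).sub_eq_pathSum hβ hR (hval 0), Pi.sub_apply, mul_sub, sum_sub_distrib]
    ring
  have hsol : ∀ a, SolvesSEM β R a 0 0 (semSolution β R a 0 0) :=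
    fun _ => solvesSEM_semSolution hβ
  constructor
  · intro h
    rw [← hgap 0 0 _ hsol, h 0 0 _ hsol, sub_self]
  · intro h u rv val hval
    rw [← sub_eq_zero, hgap u rv val hval, h]
end

section
/- Let A ~ Bernoulli(1/2), ε_1, ε_2 ~ N(0, 0.05) independent of A and of each other, X_1 = (1/2)·1(A=0) + ε_1, X_2 = (2/3)(1(A=0) - 1/2) + ε_2, and Y | (X_1, X_2) ~ Bernoulli(expit(X_1 + X_2)) where expit(x) = e^x/(1+e^x). After adaptation FT(X_1) = ε_1 and FT(Y) | (FT(X_1), X_2) ~ Bernoulli(expit(FT(X_1) + X_2)). Then E[FT(Y) | A=0] - E[FT(Y) | A=1] = E[expit(ε_1 + 1/3 + ε_2)] - E[expit(ε_1 - 1/3 + ε_2)] > 0. -/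
/-!
The event `{A = b}` is measurable for the σ-algebra generated by `(A, ε₁, ε₂)`, so on it
the conditional-expectation hypothesis lets us replace `FT(Y)` by `expit (ε₁ + X₂)`, and
there `X₂ = ±1/3 + ε₂`. Since `A` is independent of `(ε₁, ε₂)`, the mean of
`expit (ε₁ ± 1/3 + ε₂)` over `{A = b}` is its unconditional mean. The gap is positive
because `expit` is strictly increasing, so the difference of the two integrands is positive
everywhere.
-/

open MeasureTheory ProbabilityTheory
open scoped NNReal

/-- The logistic (expit) function. -/
noncomputable def expit (x : ℝ) : ℝ := Real.exp x / (1 + Real.exp x)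

lemma expit_pos (x : ℝ) : 0 < expit x := by
  unfold expit; positivity

lemma expit_le_one (x : ℝ) : expit x ≤ 1 := by
  unfold expit
  rw [div_le_one (by positivity)]
  linarith

lemma expit_strictMono : StrictMono expit := by
  intro x y hxy
  unfold expit
  rw [div_lt_div_iff₀ (by positivity) (by positivity)]
  linarith [Real.exp_lt_exp.2 hxy]

@[fun_prop]
lemma continuous_expit : Continuous expit :=
  Real.continuous_exp.div (continuous_const.add Real.continuous_exp) fun x => by positivity

lemma integrable_expit_comp {Ω : Type*} [MeasurableSpace Ω] {μ : Measure Ω}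
    [IsFiniteMeasure μ] {f : Ω → ℝ} (hf : AEMeasurable f μ) :
    Integrable (fun ω => expit (f ω)) μ :=
  .of_bound (continuous_expit.measurable.comp_aemeasurable hf).aestronglyMeasurable 1 <|
    ae_of_all _ fun ω => by
      rw [Real.norm_of_nonneg (expit_pos _).le]
      exact expit_le_one _

lemma integral_lt_integral_of_forall_lt {α : Type*} [MeasurableSpace α] {μ : Measure α}
    [NeZero μ] {f g : α → ℝ} (hf : Integrable f μ) (hg : Integrable g μ)
    (hfg : ∀ x, f x < g x) : ∫ x, f x ∂μ < ∫ x, g x ∂μ := by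
  rw [← sub_pos, ← integral_sub hg hf,
    integral_pos_iff_support_of_nonneg (fun x => (sub_pos.2 (hfg x)).le) (hg.sub hf)]
  have hsupp : Function.support (fun x => g x - f x) = Set.univ :=
    Set.eq_univ_of_forall fun x => (sub_pos.2 (hfg x)).ne'
  simp [hsupp, NeZero.ne μ]

lemma setIntegral_eq_setIntegral_of_condExp_ae_eq {Ω : Type*} {m m₀ : MeasurableSpace Ω}
    {μ : Measure Ω} (hm : m ≤ m₀) [SigmaFinite (μ.trim hm)] {f g : Ω → ℝ}
    (hf : Integrable f μ) (hfg : μ[f | m] =ᵐ[μ] g) {s : Set Ω} (hs : MeasurableSet[m] s) :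
    ∫ x in s, f x ∂μ = ∫ x in s, g x ∂μ := by
  rw [← setIntegral_condExp hm hf hs]
  exact integral_congr_ae (ae_restrict_of_ae hfg)

lemma probReal_eq_one_sub_of_forall_eq_or {Ω β : Type*} [MeasurableSpace Ω]
    [MeasurableSpace β] [MeasurableSingletonClass β] {μ : Measure Ω} [IsProbabilityMeasure μ]
    {Y : Ω → β} (hY : Measurable Y) {a b : β} (hab : a ≠ b) (hYab : ∀ ω, Y ω = a ∨ Y ω = b) :
    μ.real {ω | Y ω = b} = 1 - μ.real {ω | Y ω = a} := by
  have hcompl : {ω | Y ω = b} = {ω | Y ω = a}ᶜ := by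
    ext ω
    rcases hYab ω with h | h <;> simp [h, hab, hab.symm]
  exact hcompl ▸ probReal_compl_eq_one_sub (hY (measurableSet_singleton a))

lemma setIntegral_preimage_eq_measureReal_mul_of_condExp_ae_eq
    {Ω β γ : Type*} [MeasurableSpace Ω] [MeasurableSpace β] [MeasurableSpace γ]
    {μ : Measure Ω} [IsFiniteMeasure μ] {Y : Ω → β} {X : Ω → γ} {f g : Ω → ℝ} {φ : γ → ℝ}
    (hY : Measurable Y) (hX : Measurable X) (hYX : IndepFun Y X μ) (hf : Integrable f μ)
    (hfg : μ[f | MeasurableSpace.comap (fun ω => (Y ω, X ω)) inferInstance] =ᵐ[μ] g)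
    {s : Set β} (hs : MeasurableSet s) (hφ : Measurable φ)
    (hgφ : ∀ ω, Y ω ∈ s → g ω = φ (X ω)) :
    ∫ ω in Y ⁻¹' s, f ω ∂μ = μ.real (Y ⁻¹' s) * ∫ ω, φ (X ω) ∂μ :=
  calc ∫ ω in Y ⁻¹' s, f ω ∂μ = ∫ ω in Y ⁻¹' s, g ω ∂μ :=
        setIntegral_eq_setIntegral_of_condExp_ae_eq (hY.prodMk hX).comap_le hf hfg
          ⟨Prod.fst ⁻¹' s, measurable_fst hs, rfl⟩
    _ = ∫ ω in Y ⁻¹' s, φ (X ω) ∂μ := setIntegral_congr_fun (hY hs) hgφ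
    _ = μ.real (Y ⁻¹' s) * ∫ ω, φ (X ω) ∂μ :=
        ((IndepFun_iff_Indep Y X μ).1 hYX).setIntegral_eq_mul hY.comap_le hX.aemeasurable
          ⟨s, hs, rfl⟩ hφ.aestronglyMeasurable

theorem appendix_parity_gap_example_general
    {Ω : Type*} [m0 : MeasurableSpace Ω] (μ : Measure Ω) [IsProbabilityMeasure μ]
    (A ε₁ ε₂ : Ω → ℝ)
    (hmeas : ∀ i, Measurable (![A, ε₁, ε₂] i))
    (hAbin : ∀ ω, A ω = 0 ∨ A ω = 1)
    (hA : μ {ω | A ω = 0} = 1/2)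
    (hindep : iIndepFun (m := fun _ : Fin 3 => (inferInstance : MeasurableSpace ℝ))
      ![A, ε₁, ε₂] μ)
    (X₂ : Ω → ℝ)
    (hX₂ : ∀ ω, X₂ ω
      = (2/3) * (Set.indicator ({0} : Set ℝ) (fun _ => (1:ℝ)) (A ω) - 1/2) + ε₂ ω)
    (FTY : Ω → ℝ)
    (hFTYmeas : Measurable FTY) (hFTYbd : ∀ ω, FTY ω ∈ Set.Icc (0:ℝ) 1)
    (hcond : μ[FTY | MeasurableSpace.comap (fun ω => (A ω, ε₁ ω, ε₂ ω)) inferInstance]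
      =ᵐ[μ] fun ω => expit (ε₁ ω + X₂ ω)) :
    (∫ ω in {ω | A ω = 0}, FTY ω ∂μ) / (μ {ω | A ω = 0}).toReal
        - (∫ ω in {ω | A ω = 1}, FTY ω ∂μ) / (μ {ω | A ω = 1}).toReal
      = (∫ ω, expit (ε₁ ω + 1/3 + ε₂ ω) ∂μ) - (∫ ω, expit (ε₁ ω - 1/3 + ε₂ ω) ∂μ) ∧
    0 < (∫ ω, expit (ε₁ ω + 1/3 + ε₂ ω) ∂μ) - (∫ ω, expit (ε₁ ω - 1/3 + ε₂ ω) ∂μ) := by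
  have hAm : Measurable A := hmeas 0
  have hε₁m : Measurable ε₁ := hmeas 1
  have hε₂m : Measurable ε₂ := hmeas 2
  have hAε : IndepFun A (fun ω => (ε₁ ω, ε₂ ω)) μ :=
    (hindep.indepFun_prodMk hmeas 1 2 0 (by decide) (by decide)).symm
  have hFTY : Integrable FTY μ := .of_bound hFTYmeas.aestronglyMeasurable 1 <|
    ae_of_all _ fun ω => abs_le.2 ⟨by linarith [(hFTYbd ω).1], (hFTYbd ω).2⟩
  have hA0 : μ.real {ω | A ω = 0} = 1/2 := by simp [measureReal_def, hA]
  have hA1 : μ.real {ω | A ω = 1} = 1/2 := by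
    rw [probReal_eq_one_sub_of_forall_eq_or hAm one_ne_zero.symm hAbin, hA0]
    norm_num
  have hmean0 : ∫ ω in {ω | A ω = 0}, FTY ω ∂μ
      = μ.real {ω | A ω = 0} * ∫ ω, expit (ε₁ ω + 1/3 + ε₂ ω) ∂μ :=
    setIntegral_preimage_eq_measureReal_mul_of_condExp_ae_eq
      (φ := fun p : ℝ × ℝ => expit (p.1 + 1/3 + p.2)) hAm (hε₁m.prodMk hε₂m) hAε hFTY hcond
      (measurableSet_singleton 0) (by fun_prop) fun ω hω => by
        rw [hX₂, Set.indicator_of_mem hω]; ring_nf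
  have hmean1 : ∫ ω in {ω | A ω = 1}, FTY ω ∂μ
      = μ.real {ω | A ω = 1} * ∫ ω, expit (ε₁ ω - 1/3 + ε₂ ω) ∂μ :=
    setIntegral_preimage_eq_measureReal_mul_of_condExp_ae_eq
      (φ := fun p : ℝ × ℝ => expit (p.1 - 1/3 + p.2)) hAm (hε₁m.prodMk hε₂m) hAε hFTY hcond
      (measurableSet_singleton 1) (by fun_prop) fun ω (hω : A ω = 1) => by
        rw [hX₂, Set.indicator_of_notMem (by norm_num [hω])]; ring_nf
  refine ⟨?_, sub_pos.2 <| integral_lt_integral_of_forall_lt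
    (integrable_expit_comp (by fun_prop)) (integrable_expit_comp (by fun_prop))
    fun ω => expit_strictMono (by linarith)⟩
  rw [← measureReal_def, ← measureReal_def, hmean0, hmean1, hA0, hA1]
  ring

/-- Appendix B parity-gap example: with `A ~ Bernoulli(1/2)`,
`ε₁, ε₂ ~ N(0, 0.05)` mutually independent of `A`,
`X₂ = (2/3)(1(A=0) - 1/2) + ε₂`, `FT(X₁) = ε₁`, and
`FT(Y) | (FT(X₁), X₂) ~ Bernoulli(expit(FT(X₁) + X₂))`, the parity gap is
`E[FT(Y)|A=0] - E[FT(Y)|A=1] = E[expit(ε₁ + 1/3 + ε₂)] - E[expit(ε₁ - 1/3 + ε₂)] > 0`. -/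
theorem appendix_parity_gap_example
    {Ω : Type*} [m0 : MeasurableSpace Ω] (μ : Measure Ω) [IsProbabilityMeasure μ]
    (A ε₁ ε₂ : Ω → ℝ)
    (hmeas : ∀ i, Measurable (![A, ε₁, ε₂] i))
    (hAbin : ∀ ω, A ω = 0 ∨ A ω = 1)
    (hA : μ {ω | A ω = 0} = 1/2)
    (hε₁ : μ.map ε₁ = gaussianReal 0 ((0.05 : ℝ≥0)))
    (hε₂ : μ.map ε₂ = gaussianReal 0 ((0.05 : ℝ≥0)))
    (hindep : iIndepFun (m := fun _ : Fin 3 => (inferInstance : MeasurableSpace ℝ))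
      ![A, ε₁, ε₂] μ)
    (X₂ : Ω → ℝ)
    (hX₂ : ∀ ω, X₂ ω
      = (2/3) * (Set.indicator ({0} : Set ℝ) (fun _ => (1:ℝ)) (A ω) - 1/2) + ε₂ ω)
    (FTY : Ω → ℝ)
    (hFTYmeas : Measurable FTY) (hFTYbd : ∀ ω, FTY ω ∈ Set.Icc (0:ℝ) 1)
    (hcond : μ[FTY | MeasurableSpace.comap (fun ω => (A ω, ε₁ ω, ε₂ ω)) inferInstance]
      =ᵐ[μ] fun ω => expit (ε₁ ω + X₂ ω)) :
    (∫ ω in {ω | A ω = 0}, FTY ω ∂μ) / (μ {ω | A ω = 0}).toReal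
        - (∫ ω in {ω | A ω = 1}, FTY ω ∂μ) / (μ {ω | A ω = 1}).toReal
      = (∫ ω, expit (ε₁ ω + 1/3 + ε₂ ω) ∂μ) - (∫ ω, expit (ε₁ ω - 1/3 + ε₂ ω) ∂μ) ∧
    0 < (∫ ω, expit (ε₁ ω + 1/3 + ε₂ ω) ∂μ) - (∫ ω, expit (ε₁ ω - 1/3 + ε₂ ω) ∂μ) :=
  appendix_parity_gap_example_general (m0 := m0) μ A ε₁ ε₂ hmeas hAbin hA hindep X₂ hX₂ FTY hFTYmeas
    hFTYbd hcond
end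

section
/- Let U be a random vector with independent components uniformly distributed on [0,1], let A ∈ {0,1} be a root variable, and consider a two-variable recursive system X = g(A, U^{(X)}) with g(a, ·) strictly increasing and continuous for each a, and g(a, ·) having continuous strictly increasing inverse in u. Define FT(X) := g(0, g(1, ·)^{-1}(X)) when A = 1 and FT(X) := X when A = 0. Then FT(X) is independent of A, and FT(X) has the same distribution as X conditional on A = 0. -/
open MeasureTheory ProbabilityTheory Set

/-! Quantile matching undoes the group-specific quantile function: on `{A = 1}` one has
`ginv 1 (g 1 U) = U`, so the adapted variable is `g 0 ∘ U` everywhere. Being a function of `U`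
alone it is independent of `A`, and conditioning on `{A = 0}`, an event of `A`, leaves its law
unchanged; on that event it coincides with `X`. -/

theorem ProbabilityTheory.IndepFun.map_cond_preimage_eq_map
    {Ω α β : Type*} [MeasurableSpace Ω] [MeasurableSpace α] [MeasurableSpace β]
    {μ : Measure Ω} [IsFiniteMeasure μ] {X : Ω → α} {Y : Ω → β} {t : Set β}
    (hXY : IndepFun X Y μ) (hX : Measurable X) (ht : MeasurableSet t)
    (hYt : μ (Y ⁻¹' t) ≠ 0) :
    (μ[|Y ⁻¹' t]).map X = μ.map X := by
  ext E hE
  rw [Measure.map_apply hX hE, Measure.map_apply hX hE, cond_apply' (hX hE), inter_comm,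
    hXY.measure_inter_preimage_eq_mul _ _ hE ht, mul_comm,
    ENNReal.mul_inv_cancel_right hYt (measure_ne_top μ _)]

theorem fair_adaptation_simple_general
    {Ω : Type*} [MeasurableSpace Ω] (μ : Measure Ω) [IsProbabilityMeasure μ]
    (A U : Ω → ℝ) (hA : Measurable A) (hU : Measurable U)
    (hAbin : ∀ ω, A ω = 0 ∨ A ω = 1)
    (hApos : μ {ω | A ω = 0} ≠ 0)
    (hUrange : ∀ ω, U ω ∈ Ioo (0:ℝ) 1)
    (hindep : IndepFun A U μ)
    (g ginv : ℝ → ℝ → ℝ)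
    (hgmeas : ∀ a, Measurable (g a))
    (hinv : ∀ a, ∀ u ∈ Ioo (0:ℝ) 1, ginv a (g a u) = u) :
    IndepFun (fun ω => if A ω = 1 then g 0 (ginv 1 (g (A ω) (U ω))) else g (A ω) (U ω))
        A μ ∧
      μ.map (fun ω => if A ω = 1 then g 0 (ginv 1 (g (A ω) (U ω))) else g (A ω) (U ω))
        = (μ[|{ω | A ω = 0}]).map (fun ω => g (A ω) (U ω)) := by
  have hFT : (fun ω => if A ω = 1 then g 0 (ginv 1 (g (A ω) (U ω))) else g (A ω) (U ω))
      = fun ω => g 0 (U ω) := by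
    funext ω
    rcases hAbin ω with h | h <;> simp [h, hinv 1 _ (hUrange ω)]
  have hFT_indep : IndepFun (fun ω => g 0 (U ω)) A μ := hindep.symm.comp (hgmeas 0) measurable_id
  have hcond : (μ[|{ω | A ω = 0}]).map (fun ω => g (A ω) (U ω))
      = (μ[|A ⁻¹' {0}]).map (fun ω => g 0 (U ω)) :=
    Measure.map_congr <| ae_cond_of_forall_mem (hA (measurableSet_singleton 0))
      fun ω (h : A ω = 0) => congrArg (g · (U ω)) h
  rw [hFT, hcond, hFT_indep.map_cond_preimage_eq_map ((hgmeas 0).comp hU)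
    (measurableSet_singleton 0) hApos]
  exact ⟨hFT_indep, rfl⟩

/-- Simplest instance of the fair adaptation theorem: for `X = g(A, U)` with
`U ~ U(0,1)` independent of the binary root attribute `A`, and `g(a,·)` a
continuous strictly increasing conditional quantile function with inverse
`ginv a`, the quantile-matched adaptation
`FT(X) = g(0, ginv 1 X)` on `{A = 1}`, `FT(X) = X` on `{A = 0}`
is independent of `A` and distributed as `X` conditional on `A = 0`. -/
theorem fair_adaptation_simple
    {Ω : Type*} [MeasurableSpace Ω] (μ : Measure Ω) [IsProbabilityMeasure μ]
    (A U : Ω → ℝ) (hA : Measurable A) (hU : Measurable U)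
    (hAbin : ∀ ω, A ω = 0 ∨ A ω = 1)
    (hApos : μ {ω | A ω = 0} ≠ 0)
    (hUnif : μ.map U = MeasureTheory.volume.restrict (Ioo (0:ℝ) 1))
    (hUrange : ∀ ω, U ω ∈ Ioo (0:ℝ) 1)
    (hindep : IndepFun A U μ)
    (g ginv : ℝ → ℝ → ℝ)
    (hgmeas : ∀ a, Measurable (g a)) (hginvmeas : ∀ a, Measurable (ginv a))
    (hgmono : ∀ a, StrictMonoOn (g a) (Ioo 0 1))
    (hgcont : ∀ a, ContinuousOn (g a) (Ioo 0 1))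
    (hinv : ∀ a, ∀ u ∈ Ioo (0:ℝ) 1, ginv a (g a u) = u) :
    IndepFun (fun ω => if A ω = 1 then g 0 (ginv 1 (g (A ω) (U ω))) else g (A ω) (U ω))
        A μ ∧
      μ.map (fun ω => if A ω = 1 then g 0 (ginv 1 (g (A ω) (U ω))) else g (A ω) (U ω))
        = (μ[|{ω | A ω = 0}]).map (fun ω => g (A ω) (U ω)) :=
  fair_adaptation_simple_general μ A U hA hU hAbin hApos hUrange hindep g ginv hgmeas hinv
end
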